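/- arXiv:2509.00121 — 2 statements merged into one kernel-verified Lean document; each statement's English description precedes it below -/
import Mathlib

section
/- Let a_k/b_k, a/b and a_l/b_l be fractions in the Farey sequence of order n (with indices k ≤ l) satisfying a_k/b_k ≤ a/b ≤ a_l/b_l. If l − k ≤ (n + b + 1)/(2b), then a_k/b_k and a_l/b_l are similarly ordered. -/
/-!
Let `a/b ∈ F_n` with `a < b`, and choose `N b - a D = 1` with `n - b < D ≤ n`. The fractions
`(N - t a)/(D - t b)` have determinant `1` with `a/b`, and so do two successive ones with each
other. A fraction strictly between two fractions of determinant `1` has denominator at least the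
sum of theirs, which is `b + D > n` for the first pair and `2D - (2t+1) b > n` for later pairs
as long as `(2t+3) b ≤ n + 1`. So these fractions are the terms of `F_n` following `a/b`, and
every term at most `(n + b + 1)/(2b)` places after `a/b` has determinant `1` with it; the symmetry
`x ↦ 1 - x` gives the same before `a/b`. Finally, `p ≤ a/b ≤ r` of determinant `1` with `a/b`
satisfy `(r.num - p.num) b = 2 + a (r.den - p.den)`, which forces similar ordering.
-/

/-- The Farey fractions of order `n`: the rationals in `[0,1]` whose (reduced) denominator
is at most `n`. -/
def fareySet (n : ℕ) : Finset ℚ :=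
  ((Finset.range (n + 1) ×ˢ Finset.range (n + 1)).image fun p => (p.1 : ℚ) / (p.2 : ℚ)).filter
    fun q => 0 ≤ q ∧ q ≤ 1 ∧ q.den ≤ n

/-- The Farey sequence of order `n`: the Farey fractions of order `n` listed in
increasing order. -/
def fareyList (n : ℕ) : List ℚ := (fareySet n).sort (· ≤ ·)

/-- Two reduced fractions `q = a/b` and `q' = a'/b'` are similarly ordered if
`(a' - a) * (b' - b) ≥ 0`. -/
def SimilarlyOrdered (q q' : ℚ) : Prop :=
  0 ≤ (q'.num - q.num) * ((q'.den : ℤ) - (q.den : ℤ))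

namespace Rat

theorem num_div_eq_and_den_div_eq_of_isCoprime {a b : ℤ} (hb : 0 < b) (h : IsCoprime a b) :
    ((a : ℚ) / b).num = a ∧ (((a : ℚ) / b).den : ℤ) = b :=
  ⟨num_div_eq_of_coprime hb (Int.isCoprime_iff_gcd_eq_one.1 h),
    den_div_eq_of_coprime hb (Int.isCoprime_iff_gcd_eq_one.1 h)⟩

theorem one_sub_den (q : ℚ) : (1 - q).den = q.den := by
  simp

theorem one_sub_num (q : ℚ) : (1 - q).num = q.den - q.num := by
  have h := mul_den_eq_num (1 - q)
  rw [one_sub_den, sub_mul, one_mul, mul_den_eq_num] at h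
  exact_mod_cast h.symm

theorem num_le_den_of_le_one {q : ℚ} (hq : q ≤ 1) : q.num ≤ q.den := by
  simpa using (Rat.le_iff q 1).1 hq

theorem num_lt_den_of_lt_one {q : ℚ} (hq : q < 1) : q.num < q.den := by
  simpa using (Rat.lt_iff q 1).1 hq

theorem exists_mul_den_sub_num_mul_eq_one (q : ℚ) (n : ℤ) :
    ∃ N D : ℤ, N * q.den - q.num * D = 1 ∧ n < D + q.den ∧ D ≤ n := by
  obtain ⟨x, y, hxy⟩ := q.isCoprime_num_den
  have hb : (0 : ℤ) < q.den := mod_cast q.pos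
  have hdiv := Int.mul_ediv_add_emod (n + x) q.den
  have hlo := Int.emod_nonneg (n + x) hb.ne'
  have hhi := Int.emod_lt_of_pos (n + x) hb
  exact ⟨y + (n + x) / q.den * q.num, -x + (n + x) / q.den * q.den,
    by linear_combination hxy, by linarith, by linarith⟩

end Rat

def fareyDet (u v : ℚ) : ℤ := v.num * u.den - u.num * v.den

theorem fareyDet_one_sub (u v : ℚ) : fareyDet (1 - v) (1 - u) = fareyDet u v := by
  simp only [fareyDet, Rat.one_sub_num, Rat.one_sub_den]
  ring

theorem mem_fareySet_iff {n : ℕ} {q : ℚ} :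
    q ∈ fareySet n ↔ 0 ≤ q ∧ q ≤ 1 ∧ q.den ≤ n := by
  refine Finset.mem_filter.trans (and_iff_right_of_imp fun ⟨h0, h1, hd⟩ => ?_)
  have hnum := Rat.num_le_den_of_le_one h1
  refine Finset.mem_image.2 ⟨(q.num.toNat, q.den), ?_, ?_⟩
  · simp only [Finset.mem_product, Finset.mem_range]
    omega
  · change ((q.num.toNat : ℕ) : ℚ) / (q.den : ℚ) = q
    have : ((q.num.toNat : ℕ) : ℚ) = q.num := by
      exact_mod_cast Int.toNat_of_nonneg (Rat.num_nonneg.2 h0)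
    rw [this, Rat.num_div_den]

theorem one_sub_mem_fareySet {n : ℕ} {q : ℚ} (hq : q ∈ fareySet n) :
    1 - q ∈ fareySet n := by
  obtain ⟨h0, h1, hd⟩ := mem_fareySet_iff.1 hq
  exact mem_fareySet_iff.2 ⟨by linarith, by linarith, by rwa [Rat.one_sub_den]⟩

theorem fareyDet_intCast_div {q : ℚ} {P Q : ℤ} (hQ : 0 < Q)
    (h : P * q.den - q.num * Q = 1) :
    fareyDet q (P / Q) = 1 ∧ ((P : ℚ) / Q).num = P ∧ (((P : ℚ) / Q).den : ℤ) = Q := by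
  obtain ⟨hnum, hden⟩ := Rat.num_div_eq_and_den_div_eq_of_isCoprime (a := P) hQ
    ⟨q.den, -q.num, by linear_combination h⟩
  exact ⟨by rw [fareyDet, hnum, hden, h], hnum, hden⟩

theorem intCast_div_mem_fareySet {n : ℕ} {q : ℚ} (hq0 : 0 ≤ q) (hq1 : q < 1) {P Q : ℤ}
    (hQ : 0 < Q) (hQn : Q ≤ n) (h : P * q.den - q.num * Q = 1) :
    (P / Q : ℚ) ∈ fareySet n := by
  obtain ⟨-, -, hden⟩ := fareyDet_intCast_div hQ h
  have ha := Rat.num_nonneg.2 hq0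
  have hab := Rat.num_lt_den_of_lt_one hq1
  refine mem_fareySet_iff.2 ⟨div_nonneg ?_ (by exact_mod_cast hQ.le), ?_, by omega⟩
  · exact_mod_cast (show 0 ≤ P by nlinarith)
  · rw [div_le_one (by exact_mod_cast hQ)]
    exact_mod_cast (show P ≤ Q by nlinarith)

def FareyConsecutive (n : ℕ) (u v : ℚ) : Prop :=
  u ∈ fareySet n ∧ v ∈ fareySet n ∧ u < v ∧ ∀ w ∈ fareySet n, u < w → v ≤ w

namespace FareyConsecutive

variable {n : ℕ} {u v v' : ℚ}

theorem eq_of_left (h : FareyConsecutive n u v) (h' : FareyConsecutive n u v') : v = v' :=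
  le_antisymm (h.2.2.2 v' h'.2.1 h'.2.2.1) (h'.2.2.2 v h.2.1 h.2.2.1)

theorem one_sub (h : FareyConsecutive n u v) : FareyConsecutive n (1 - v) (1 - u) := by
  obtain ⟨hu, hv, huv, hmin⟩ := h
  refine ⟨one_sub_mem_fareySet hv, one_sub_mem_fareySet hu, by linarith, fun w hw hvw => ?_⟩
  by_contra! hwu
  have := hmin (1 - w) (one_sub_mem_fareySet hw) (by linarith)
  linarith

end FareyConsecutive

theorem fareyConsecutive_of_fareyDet_eq_one {n : ℕ} {u v : ℚ} (hu : u ∈ fareySet n)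
    (hv : v ∈ fareySet n) (hdet : fareyDet u v = 1) (hsum : n < u.den + v.den) :
    FareyConsecutive n u v := by
  unfold fareyDet at hdet
  have hlt : ∀ {x y : ℚ}, x < y ↔ x.num * y.den < y.num * x.den := Rat.lt_iff _ _
  refine ⟨hu, hv, hlt.2 (by linarith), fun w hw huw => ?_⟩
  by_contra! hwv
  have h1 := hlt.1 huw
  have h2 := hlt.1 hwv
  have hwn := (mem_fareySet_iff.1 hw).2.2
  -- both brackets are positive integers, so `w.den ≥ u.den + v.den > n`
  have key : u.den * (v.num * w.den - w.num * v.den) + v.den * (w.num * u.den - u.num * w.den)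
      = (w.den : ℤ) := by linear_combination (w.den : ℤ) * hdet
  nlinarith

theorem fareyDet_eq_one_of_fareyConsecutive_chain {n s : ℕ} {q : ℚ} (hq : q ∈ fareySet n)
    (hq1 : q < 1) (hs : (2 * s + 1) * q.den ≤ n + 1) (u : ℕ → ℚ) (hu0 : u 0 = q)
    (hu : ∀ t ≤ s, FareyConsecutive n (u t) (u (t + 1))) :
    fareyDet q (u (s + 1)) = 1 := by
  obtain ⟨hq0, -, hbn⟩ := mem_fareySet_iff.1 hq
  obtain ⟨N, D, hdet, hnD, hDn⟩ := q.exists_mul_den_sub_num_mul_eq_one n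
  set y : ℕ → ℚ := fun t => ((N - t * q.num : ℤ) : ℚ) / ((D - t * q.den : ℤ) : ℚ)
  have hpos : ∀ t ≤ s, 0 < D - t * q.den ∧ D - t * q.den ≤ n := by
    intro t ht
    have : (t : ℤ) ≤ s := mod_cast ht
    have : (2 * s + 1) * (q.den : ℤ) ≤ n + 1 := mod_cast hs
    have : (q.den : ℤ) ≤ n := mod_cast hbn
    constructor <;> nlinarith [q.pos]
  have hy t (ht : t ≤ s) : fareyDet q (y t) = 1 ∧ (y t).num = N - t * q.num ∧
      ((y t).den : ℤ) = D - t * q.den := fareyDet_intCast_div (hpos t ht).1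
    (show (N - t * q.num) * q.den - q.num * (D - t * q.den) = 1 by linear_combination hdet)
  have hmem t (ht : t ≤ s) : y t ∈ fareySet n :=
    intCast_div_mem_fareySet hq0 hq1 (hpos t ht).1 (hpos t ht).2 (by linear_combination hdet)
  have key : ∀ t ≤ s, u (t + 1) = y t := by
    intro t ht
    induction t with
    | zero =>
      refine (hu 0 s.zero_le).eq_of_left ?_
      rw [hu0]
      refine fareyConsecutive_of_fareyDet_eq_one hq (hmem 0 s.zero_le) (hy 0 s.zero_le).1 ?_
      have := (hy 0 s.zero_le).2.2
      simp only [Nat.cast_zero, zero_mul, sub_zero] at this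
      omega
    | succ t ih =>
      have h := hu (t + 1) ht
      rw [ih (by omega)] at h
      obtain ⟨-, hnum, hden⟩ := hy t (by omega)
      obtain ⟨-, hnum', hden'⟩ := hy (t + 1) ht
      refine h.eq_of_left
        (fareyConsecutive_of_fareyDet_eq_one (hmem t (by omega)) (hmem _ ht) ?_ ?_)
      · rw [fareyDet, hnum, hden, hnum', hden']
        push_cast
        linear_combination hdet
      · have : (t : ℤ) + 1 ≤ s := mod_cast ht
        have : (2 * s + 1) * (q.den : ℤ) ≤ n + 1 := mod_cast hs
        push_cast at hden' ⊢
        nlinarith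
  rw [key s le_rfl]
  exact (hy s le_rfl).1

theorem mem_fareyList_iff {n : ℕ} {q : ℚ} : q ∈ fareyList n ↔ q ∈ fareySet n :=
  Finset.mem_sort _

theorem fareyList_get_mem (n : ℕ) (i : Fin (fareyList n).length) :
    (fareyList n).get i ∈ fareySet n :=
  mem_fareyList_iff.1 (List.get_mem _ i)

theorem fareyList_get_strictMono (n : ℕ) : StrictMono (fareyList n).get :=
  (fareySet n).sortedLT_sort.strictMono_get

theorem fareyConsecutive_getElem_fareyList {n i : ℕ} (hi : i + 1 < (fareyList n).length) :
    FareyConsecutive n (fareyList n)[i] (fareyList n)[i + 1] := by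
  have hs := (fareySet n).sortedLT_sort
  refine ⟨mem_fareyList_iff.1 (List.getElem_mem _), mem_fareyList_iff.1 (List.getElem_mem _),
    hs.getElem_lt_getElem_iff.2 (Nat.lt_succ_self i), fun w hw hiw => ?_⟩
  obtain ⟨m, hm, rfl⟩ := List.mem_iff_getElem.1 (mem_fareyList_iff.2 hw)
  exact hs.getElem_le_getElem_iff.2 (hs.getElem_lt_getElem_iff.1 hiw)

theorem fareyDet_fareyList_get_eq_one_of_lt {n : ℕ} {j l : Fin (fareyList n).length}
    (hjl : j < l)
    (hbound : 2 * ((fareyList n).get j).den * (l - j : ℕ) ≤ n + ((fareyList n).get j).den + 1) :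
    fareyDet ((fareyList n).get j) ((fareyList n).get l) = 1 := by
  obtain ⟨s, hs⟩ : ∃ s, (l : ℕ) = j + (s + 1) := ⟨l - j - 1, by omega⟩
  have hq1 : (fareyList n).get j < 1 :=
    (fareyList_get_strictMono n hjl).trans_le (mem_fareySet_iff.1 (fareyList_get_mem n l)).2.1
  have h := fareyDet_eq_one_of_fareyConsecutive_chain (fareyList_get_mem n j) hq1 (s := s)
    (by rw [hs, Nat.add_sub_cancel_left] at hbound; nlinarith)
    (fun t => (fareyList n).getD (j + t) 0) (by simp) fun t ht => by
      simp only [List.getD_eq_getElem _ _ (show j + t < (fareyList n).length by omega),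
        List.getD_eq_getElem _ _ (show j + (t + 1) < (fareyList n).length by omega)]
      exact fareyConsecutive_getElem_fareyList _
  simpa [List.getD_eq_getElem _ _ (show j + (s + 1) < (fareyList n).length by omega), ← hs]
    using h

theorem fareyDet_fareyList_get_eq_one_of_gt {n : ℕ} {k j : Fin (fareyList n).length}
    (hkj : k < j)
    (hbound : 2 * ((fareyList n).get j).den * (j - k : ℕ) ≤ n + ((fareyList n).get j).den + 1) :
    fareyDet ((fareyList n).get k) ((fareyList n).get j) = 1 := by
  obtain ⟨s, hs⟩ : ∃ s, (j : ℕ) = k + (s + 1) := ⟨j - k - 1, by omega⟩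
  have hq0 : 0 < (fareyList n).get j :=
    (mem_fareySet_iff.1 (fareyList_get_mem n k)).1.trans_lt (fareyList_get_strictMono n hkj)
  have h := fareyDet_eq_one_of_fareyConsecutive_chain
    (one_sub_mem_fareySet (fareyList_get_mem n j)) (by linarith) (s := s)
    (by rw [Rat.one_sub_den]; rw [hs, Nat.add_sub_cancel_left] at hbound; nlinarith)
    (fun t => 1 - (fareyList n).getD (j - t) 0) (by simp) fun t ht => by
      have e : (j : ℕ) - t = j - (t + 1) + 1 := by omega
      simp only [e,
        List.getD_eq_getElem _ _ (show j - (t + 1) + 1 < (fareyList n).length by omega),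
        List.getD_eq_getElem _ _ (show j - (t + 1) < (fareyList n).length by omega)]
      exact (fareyConsecutive_getElem_fareyList _).one_sub
  have hk : (j : ℕ) - (s + 1) = k := by omega
  simpa [hk, List.getD_eq_getElem _ _ k.isLt, fareyDet_one_sub] using h

theorem similarlyOrdered_of_fareyDet_eq_one {u v : ℚ} (hu : 0 ≤ u) (h : fareyDet u v = 1) :
    SimilarlyOrdered u v := by
  unfold fareyDet at h
  unfold SimilarlyOrdered
  have ha := Rat.num_nonneg.2 hu
  have hb : (0 : ℤ) < u.den := mod_cast u.pos
  have hB : (0 : ℤ) < v.den := mod_cast v.pos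
  rcases le_total u.num v.num with h1 | h1 <;> rcases le_total (u.den : ℤ) v.den with h2 | h2
  · exact mul_nonneg (by linarith) (by linarith)
  · by_contra hneg
    have hA : u.num < v.num := lt_of_le_of_ne h1 (by intro e; simp [e] at hneg)
    have hB' : (v.den : ℤ) < u.den := lt_of_le_of_ne h2 (by intro e; simp [e] at hneg)
    nlinarith [mul_nonneg (by linarith : (0 : ℤ) ≤ v.num - u.num - 1) hb.le,
      mul_nonneg ha (by linarith : (0 : ℤ) ≤ u.den - 1 - v.den)]
  · nlinarith
  · exact mul_nonneg_of_nonpos_of_nonpos (by linarith) (by linarith)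

theorem similarlyOrdered_of_fareyDet_eq_one_of_fareyDet_eq_one {p q r : ℚ} (hq0 : 0 < q)
    (hq1 : q < 1) (hpq : fareyDet p q = 1) (hqr : fareyDet q r = 1) : SimilarlyOrdered p r := by
  unfold fareyDet at hpq hqr
  unfold SimilarlyOrdered
  have ha : 0 < q.num := Rat.num_pos.2 hq0
  have hab := Rat.num_lt_den_of_lt_one hq1
  have key : (r.num - p.num) * q.den = 2 + q.num * (r.den - p.den) := by
    linear_combination hpq + hqr
  rcases le_or_gt (p.den : ℤ) r.den with h | h
  · have : 0 ≤ r.num - p.num := by nlinarith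
    exact mul_nonneg this (by linarith)
  · have : r.num - p.num ≤ 0 := by nlinarith
    exact mul_nonneg_of_nonpos_of_nonpos this (by linarith)

theorem farey_similarly_ordered_near_small_denominator_general (n : ℕ)
    (k l : Fin (fareyList n).length) (hkl : k ≤ l) (q : ℚ) (hq : q ∈ fareySet n)
    (hqk : (fareyList n).get k ≤ q) (hql : q ≤ (fareyList n).get l)
    (hdist : ((l : ℕ) : ℚ) - ((k : ℕ) : ℚ) ≤ ((n : ℚ) + (q.den : ℚ) + 1) / (2 * (q.den : ℚ))) :
    SimilarlyOrdered ((fareyList n).get k) ((fareyList n).get l) := by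
  obtain ⟨j, rfl⟩ := List.mem_iff_get.1 (mem_fareyList_iff.2 hq)
  have hkj := (fareyList_get_strictMono n).le_iff_le.1 hqk
  have hjl := (fareyList_get_strictMono n).le_iff_le.1 hql
  have hbound : 2 * ((fareyList n).get j).den * (l - k : ℕ)
      ≤ n + ((fareyList n).get j).den + 1 := by
    rw [le_div_iff₀ (by positivity), ← Nat.cast_sub hkl] at hdist
    have : ((2 * ((fareyList n).get j).den * (l - k : ℕ) : ℕ) : ℚ)
        ≤ ((n + ((fareyList n).get j).den + 1 : ℕ) : ℚ) := by push_cast; linarith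
    exact_mod_cast this
  have hbound_of_le {i i' : ℕ} (h : i' - i ≤ l - k) := (Nat.mul_le_mul_left _ h).trans hbound
  have hmem i := mem_fareySet_iff.1 (fareyList_get_mem n i)
  rcases hkj.lt_or_eq with hkj | rfl <;> rcases hjl.lt_or_eq with hjl | rfl
  · exact similarlyOrdered_of_fareyDet_eq_one_of_fareyDet_eq_one
      ((hmem k).1.trans_lt (fareyList_get_strictMono n hkj))
      ((fareyList_get_strictMono n hjl).trans_le (hmem l).2.1)
      (fareyDet_fareyList_get_eq_one_of_gt hkj (hbound_of_le (by omega)))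
      (fareyDet_fareyList_get_eq_one_of_lt hjl (hbound_of_le (by omega)))
  · exact similarlyOrdered_of_fareyDet_eq_one (hmem k).1
      (fareyDet_fareyList_get_eq_one_of_gt hkj (hbound_of_le le_rfl))
  · exact similarlyOrdered_of_fareyDet_eq_one (hmem k).1
      (fareyDet_fareyList_get_eq_one_of_lt hjl (hbound_of_le le_rfl))
  · simp [SimilarlyOrdered]

/-- If `a_k/b_k ≤ a/b ≤ a_l/b_l` are fractions in the Farey sequence of order `n` with
`k ≤ l` and `l - k ≤ (n + b + 1)/(2b)`, then `a_k/b_k` and `a_l/b_l` are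
similarly ordered. -/
theorem farey_similarly_ordered_near_small_denominator (n : ℕ) (hn : 1 ≤ n)
    (k l : Fin (fareyList n).length) (hkl : k ≤ l) (q : ℚ) (hq : q ∈ fareySet n)
    (hqk : (fareyList n).get k ≤ q) (hql : q ≤ (fareyList n).get l)
    (hdist : ((l : ℕ) : ℚ) - ((k : ℕ) : ℚ) ≤ ((n : ℚ) + (q.den : ℚ) + 1) / (2 * (q.den : ℚ))) :
    SimilarlyOrdered ((fareyList n).get k) ((fareyList n).get l) :=
  farey_similarly_ordered_near_small_denominator_general n k l hkl q hq hqk hql hdist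
end

section
/- Let n be a positive integer and let a/b be a fraction in the Farey sequence of order n with 2 ≤ b ≤ n and 0 < a/b < 1. Let p/q and r/s be the fractions immediately preceding and immediately following a/b in the Farey sequence of order b. Then the fraction immediately preceding a/b in the Farey sequence of order n equals (p + da)/(q + db) with d = ⌊(n − q)/b⌋, and the fraction immediately following a/b in the Farey sequence of order n equals (r + d'a)/(s + d'b) with d' = ⌊(n − s)/b⌋. -/
/-!
Write `q = a/b`. Two fractions `α < β` with `β.num * α.den - α.num * β.den = 1` are adjacent, and
every fraction strictly between adjacent `α` and `β` has denominator at least `α.den + β.den`.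
Hence a fraction `w` adjacent to `q` with `w.den ≤ n < w.den + b` is the neighbour of `q` in the
Farey sequence of order `n`. Bézout gives `a x - b y = 1` with `0 < x < b`, and then `y/x` and
`(a - y)/(b - x)` are such neighbours in order `b`, so `u` and `v` are adjacent to `q`. Adjacency
survives adding `d` copies of `(a, b)` to numerator and denominator, and `d = ⌊(n - den)/b⌋` is
exactly the choice that lands the denominator in `(n - b, n]`.
-/

lemma mem_fareySet {n : ℕ} {y : ℚ} : y ∈ fareySet n ↔ 0 ≤ y ∧ y ≤ 1 ∧ y.den ≤ n := by
  refine Finset.mem_filter.trans ⟨fun h => h.2, fun h => ⟨?_, h⟩⟩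
  obtain ⟨h0, h1, hd⟩ := h
  have hnum : 0 ≤ y.num := Rat.num_nonneg.mpr h0
  have hnum_le : y.num ≤ y.den := by simpa using (Rat.le_iff _ _).mp h1
  refine Finset.mem_image.mpr ⟨(y.num.toNat, y.den), ?_, ?_⟩
  · simp only [Finset.mem_product, Finset.mem_range]
    omega
  · have : ((y.num.toNat : ℕ) : ℚ) = (y.num : ℚ) := by exact_mod_cast Int.toNat_of_nonneg hnum
    simp only [this, Rat.num_div_den]

lemma num_den_div_of_isCoprime {P : ℤ} {Q : ℕ} (hQ : 0 < Q) (h : IsCoprime P Q) :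
    ((P : ℚ) / Q).num = P ∧ ((P : ℚ) / Q).den = Q := by
  have hQ' : (0 : ℤ) < Q := by exact_mod_cast hQ
  have hcop : P.natAbs.Coprime (Q : ℤ).natAbs := Int.isCoprime_iff_gcd_eq_one.mp h
  have hnum := Rat.num_div_eq_of_coprime hQ' hcop
  have hden := Rat.den_div_eq_of_coprime hQ' hcop
  push_cast at hnum hden
  exact ⟨hnum, by exact_mod_cast hden⟩

def FareyAdjacent (α β : ℚ) : Prop :=
  β.num * α.den - α.num * β.den = 1

namespace FareyAdjacent

variable {α β γ w q : ℚ} {n : ℕ}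

lemma lt (h : FareyAdjacent α β) : α < β := by
  rw [Rat.lt_iff]
  unfold FareyAdjacent at h
  omega

lemma den_add_den_le (h : FareyAdjacent α β) (hαγ : α < γ) (hγβ : γ < β) :
    α.den + β.den ≤ γ.den := by
  have hleft : 1 ≤ γ.num * α.den - α.num * γ.den := by have := (Rat.lt_iff _ _).mp hαγ; omega
  have hright : 1 ≤ β.num * γ.den - γ.num * β.den := by have := (Rat.lt_iff _ _).mp hγβ; omega
  have hα : (0 : ℤ) < α.den := by exact_mod_cast α.pos
  have hβ : (0 : ℤ) < β.den := by exact_mod_cast β.pos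
  have hsplit : (γ.den : ℤ) = β.den * (γ.num * α.den - α.num * γ.den)
      + α.den * (β.num * γ.den - γ.num * β.den) := by
    unfold FareyAdjacent at h
    linear_combination (-(γ.den : ℤ)) * h
  have : (α.den : ℤ) + β.den ≤ γ.den := by nlinarith
  exact_mod_cast this

lemma isGreatest (h : FareyAdjacent w q) (hw : 0 ≤ w) (hq : q ≤ 1) (hwn : w.den ≤ n)
    (hnw : n < w.den + q.den) : IsGreatest {y : ℚ | y ∈ fareySet n ∧ y < q} w := by
  refine ⟨⟨mem_fareySet.mpr ⟨hw, h.lt.le.trans hq, hwn⟩, h.lt⟩, ?_⟩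
  rintro y ⟨hy, hyq⟩
  by_contra! hwy
  have := h.den_add_den_le hwy hyq
  have := (mem_fareySet.mp hy).2.2
  omega

lemma isLeast (h : FareyAdjacent q w) (hw : w ≤ 1) (hq : 0 ≤ q) (hwn : w.den ≤ n)
    (hnw : n < w.den + q.den) : IsLeast {y : ℚ | y ∈ fareySet n ∧ q < y} w := by
  refine ⟨⟨mem_fareySet.mpr ⟨hq.trans h.lt.le, hw, hwn⟩, h.lt⟩, ?_⟩
  rintro y ⟨hy, hqy⟩
  by_contra! hyw
  have := h.den_add_den_le hqy hyw
  have := (mem_fareySet.mp hy).2.2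
  omega

end FareyAdjacent

section Construction

variable {q : ℚ} {P : ℤ} {Q : ℕ}

lemma fareyAdjacent_div_left (hQ : 0 < Q) (h : q.num * Q - P * q.den = 1) :
    FareyAdjacent (P / Q) q ∧ ((P : ℚ) / Q).den = Q := by
  obtain ⟨hnum, hden⟩ :=
    num_den_div_of_isCoprime (P := P) hQ ⟨-q.den, q.num, by linear_combination h⟩
  refine ⟨?_, hden⟩
  rw [FareyAdjacent, hnum, hden]
  exact h

lemma fareyAdjacent_div_right (hQ : 0 < Q) (h : P * q.den - q.num * Q = 1) :
    FareyAdjacent q (P / Q) ∧ ((P : ℚ) / Q).den = Q := by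
  obtain ⟨hnum, hden⟩ :=
    num_den_div_of_isCoprime (P := P) hQ ⟨q.den, -q.num, by linear_combination h⟩
  refine ⟨?_, hden⟩
  rw [FareyAdjacent, hnum, hden]
  exact h

end Construction

lemma exists_mul_sub_mul_eq_one_of_isCoprime {a b : ℤ} (h : IsCoprime a b) (hb : 1 < b) :
    ∃ x y : ℤ, a * x - b * y = 1 ∧ 0 < x ∧ x < b := by
  obtain ⟨c, d, hcd⟩ := h
  have hxy : a * (c % b) - b * (-d - a * (c / b)) = 1 := by
    rw [Int.emod_def]
    linear_combination hcd
  refine ⟨c % b, _, hxy, ?_, Int.emod_lt_of_pos c (by omega)⟩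
  rcases (Int.emod_nonneg c (by omega : b ≠ 0)).lt_or_eq with hpos | hzero
  · exact hpos
  · rw [← hzero] at hxy
    have hdvd : b ∣ 1 := ⟨d + a * (c / b), by linear_combination -hxy⟩
    have := Int.le_of_dvd one_pos hdvd
    omega

lemma exists_fareyAdjacent_pair {q : ℚ} (h0 : 0 < q) (h1 : q < 1) :
    ∃ w w' : ℚ, FareyAdjacent w q ∧ FareyAdjacent q w' ∧ 0 ≤ w ∧ w' ≤ 1 ∧
      w.den < q.den ∧ w'.den < q.den := by
  have ha : 0 < q.num := Rat.num_pos.mpr h0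
  have hab : q.num < q.den := Rat.num_lt_denom_iff.mpr h1
  obtain ⟨x, y, hxy, hx0, hxb⟩ :=
    exists_mul_sub_mul_eq_one_of_isCoprime q.isCoprime_num_den (by omega)
  have hy0 : 0 ≤ y := by nlinarith
  have hyx : y < x := by nlinarith
  lift x to ℕ using hx0.le
  obtain ⟨hw, hwd⟩ := fareyAdjacent_div_left (q := q) (P := y) (Q := x) (by omega)
    (by linear_combination hxy)
  obtain ⟨hw', hw'd⟩ := fareyAdjacent_div_right (q := q) (P := q.num - y) (Q := q.den - x)
    (by omega) (by push_cast [(by omega : x ≤ q.den)]; linear_combination hxy)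
  refine ⟨_, _, hw, hw', by positivity, ?_, by omega, by omega⟩
  rw [div_le_one (by norm_num; omega)]
  have : q.num - y ≤ q.den - x := by
    -- `b (x - y) = (b - a) x + 1 ≤ (b - a) (b - 1) + 1 < b (b - a + 1)`
    by_contra! hlt
    nlinarith [mul_le_mul_of_nonneg_left (by omega : (x : ℤ) ≤ q.den - 1)
      (by omega : (0 : ℤ) ≤ q.den - q.num)]
  push_cast [(by omega : x ≤ q.den)]
  exact_mod_cast this

lemma fareyAdjacent_of_isGreatest {q u : ℚ} (h0 : 0 < q) (h1 : q < 1)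
    (hu : IsGreatest {y : ℚ | y ∈ fareySet q.den ∧ y < q} u) : FareyAdjacent u q := by
  obtain ⟨w, -, hw, -, hw0, -, hwd, -⟩ := exists_fareyAdjacent_pair h0 h1
  rwa [hu.unique (hw.isGreatest hw0 h1.le hwd.le (Nat.lt_add_of_pos_left w.pos))]

lemma fareyAdjacent_of_isLeast {q v : ℚ} (h0 : 0 < q) (h1 : q < 1)
    (hv : IsLeast {y : ℚ | y ∈ fareySet q.den ∧ q < y} v) : FareyAdjacent q v := by
  obtain ⟨-, w', -, hw', -, hw'1, -, hw'd⟩ := exists_fareyAdjacent_pair h0 h1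
  rwa [hv.unique (hw'.isLeast hw'1 h0.le hw'd.le (Nat.lt_add_of_pos_left w'.pos))]

lemma Nat.le_add_div_mul_lt {n m b : ℕ} (hm : m ≤ n) (hb : 0 < b) :
    m + (n - m) / b * b ≤ n ∧ n < m + (n - m) / b * b + b :=
  ⟨by have := Nat.div_mul_le_self (n - m) b; omega,
    by have := Nat.lt_div_mul_add (a := n - m) hb; omega⟩

namespace FareyAdjacent

variable {u v q : ℚ} {n : ℕ}

lemma isGreatest_add_mul (h : FareyAdjacent u q) (hu : 0 ≤ u) (hq : q ≤ 1) (hun : u.den ≤ n) :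
    IsGreatest {y : ℚ | y ∈ fareySet n ∧ y < q}
      (((u.num + (((n - u.den) / q.den : ℕ) : ℤ) * q.num : ℤ) : ℚ) /
        (((u.den + ((n - u.den) / q.den) * q.den : ℕ) : ℚ))) := by
  set d := (n - u.den) / q.den
  obtain ⟨hadj, hden⟩ := fareyAdjacent_div_left (q := q) (P := u.num + d * q.num)
    (Q := u.den + d * q.den) (by have := u.pos; omega)
    (by unfold FareyAdjacent at h; push_cast; linear_combination h)
  have hnum : 0 ≤ u.num + d * q.num := by
    have := Rat.num_nonneg.mpr hu
    have := Rat.num_nonneg.mpr (hu.trans h.lt.le)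
    positivity
  obtain ⟨hle, hlt⟩ := Nat.le_add_div_mul_lt hun q.pos
  exact hadj.isGreatest (by positivity) hq (hden.symm ▸ hle) (hden.symm ▸ hlt)

lemma isLeast_add_mul (h : FareyAdjacent q v) (hv : v ≤ 1) (hq : 0 ≤ q) (hvn : v.den ≤ n) :
    IsLeast {y : ℚ | y ∈ fareySet n ∧ q < y}
      (((v.num + (((n - v.den) / q.den : ℕ) : ℤ) * q.num : ℤ) : ℚ) /
        (((v.den + ((n - v.den) / q.den) * q.den : ℕ) : ℚ))) := by
  set d := (n - v.den) / q.den
  obtain ⟨hadj, hden⟩ := fareyAdjacent_div_right (q := q) (P := v.num + d * q.num)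
    (Q := v.den + d * q.den) (by have := v.pos; omega)
    (by unfold FareyAdjacent at h; push_cast; linear_combination h)
  have hnum : v.num + d * q.num ≤ v.den + d * q.den := by
    have := Rat.num_le_denom_iff.mpr hv
    have := Rat.num_le_denom_iff.mpr (h.lt.le.trans hv)
    nlinarith
  obtain ⟨hle, hlt⟩ := Nat.le_add_div_mul_lt hvn q.pos
  refine hadj.isLeast ?_ hq (hden.symm ▸ hle) (hden.symm ▸ hlt)
  rw [div_le_one (by have := v.pos; positivity)]
  exact_mod_cast hnum

end FareyAdjacent

theorem farey_neighbors_formula_general (n : ℕ) (q : ℚ) (hq : q ∈ fareySet n)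
    (h0 : 0 < q) (h1 : q < 1) (u v : ℚ)
    (hu : IsGreatest {y : ℚ | y ∈ fareySet q.den ∧ y < q} u)
    (hv : IsLeast {y : ℚ | y ∈ fareySet q.den ∧ q < y} v) :
    IsGreatest {y : ℚ | y ∈ fareySet n ∧ y < q}
      (((u.num + (((n - u.den) / q.den : ℕ) : ℤ) * q.num : ℤ) : ℚ) /
        (((u.den + ((n - u.den) / q.den) * q.den : ℕ) : ℚ))) ∧
    IsLeast {y : ℚ | y ∈ fareySet n ∧ q < y}
      (((v.num + (((n - v.den) / q.den : ℕ) : ℤ) * q.num : ℤ) : ℚ) /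
        (((v.den + ((n - v.den) / q.den) * q.den : ℕ) : ℚ))) := by
  obtain ⟨hq0, hq1, hqn⟩ := mem_fareySet.mp hq
  obtain ⟨hu0, -, hud⟩ := mem_fareySet.mp hu.1.1
  obtain ⟨-, hv1, hvd⟩ := mem_fareySet.mp hv.1.1
  exact ⟨(fareyAdjacent_of_isGreatest h0 h1 hu).isGreatest_add_mul hu0 hq1 (hud.trans hqn),
    (fareyAdjacent_of_isLeast h0 h1 hv).isLeast_add_mul hv1 hq0 (hvd.trans hqn)⟩

/-- Let `a/b` be a fraction in the Farey sequence of order `n` with `2 ≤ b` and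
`0 < a/b < 1`, and let `p/q` (`= u`) and `r/s` (`= v`) be the fractions immediately
preceding and following `a/b` in the Farey sequence of order `b`. Then the fraction
immediately preceding `a/b` in the Farey sequence of order `n` is
`(p + da)/(q + db)` with `d = ⌊(n − q)/b⌋`, and the fraction immediately following it is
`(r + d'a)/(s + d'b)` with `d' = ⌊(n − s)/b⌋`. -/
theorem farey_neighbors_formula (n : ℕ) (hn : 1 ≤ n) (q : ℚ) (hq : q ∈ fareySet n)
    (hden : 2 ≤ q.den) (h0 : 0 < q) (h1 : q < 1) (u v : ℚ)
    (hu : IsGreatest {y : ℚ | y ∈ fareySet q.den ∧ y < q} u)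
    (hv : IsLeast {y : ℚ | y ∈ fareySet q.den ∧ q < y} v) :
    IsGreatest {y : ℚ | y ∈ fareySet n ∧ y < q}
      (((u.num + (((n - u.den) / q.den : ℕ) : ℤ) * q.num : ℤ) : ℚ) /
        (((u.den + ((n - u.den) / q.den) * q.den : ℕ) : ℚ))) ∧
    IsLeast {y : ℚ | y ∈ fareySet n ∧ q < y}
      (((v.num + (((n - v.den) / q.den : ℕ) : ℤ) * q.num : ℤ) : ℚ) /
        (((v.den + ((n - v.den) / q.den) * q.den : ℕ) : ℚ))) :=
  farey_neighbors_formula_general n q hq h0 h1 u v hu hv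
end
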